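/- For all nonnegative integers n and ℓ: (n+1)·#{Q in F_n : north(Q) = ℓ} = C(n+1, ℓ+1)·C(2n−ℓ+1, ℓ). -/

import Mathlib

/-- An `F`-step: `(0,1)` or `(a,b)` with `a ≥ 1` and `b ≤ 1`. -/
def IsFStep (s : ℤ × ℤ) : Prop := s = (0, 1) ∨ (1 ≤ s.1 ∧ s.2 ≤ 1)

/-- An `F`-path: a sequence of `F`-steps whose prefix sums satisfy
`a_1 + ⋯ + a_i ≤ b_1 + ⋯ + b_i`. -/
def IsFPath (Q : List (ℤ × ℤ)) : Prop :=
  (∀ s ∈ Q, IsFStep s) ∧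
  ∀ i : ℕ, ((Q.take i).map Prod.fst).sum ≤ ((Q.take i).map Prod.snd).sum

/-- The set of `F`-paths of length `n`. -/
def FPaths (n : ℕ) : Set (List (ℤ × ℤ)) := {Q | Q.length = n ∧ IsFPath Q}

def fheight (Q : List (ℤ × ℤ)) : ℤ := (Q.map Prod.snd).sum - (Q.map Prod.fst).sum

def fnorth (Q : List (ℤ × ℤ)) : ℕ := Q.countP (fun s => decide (s = ((0 : ℤ), (1 : ℤ))))

def faone (Q : List (ℤ × ℤ)) : ℕ := Q.countP (fun s => decide (s.1 = 1))

def fbone (Q : List (ℤ × ℤ)) : ℕ := Q.countP (fun s => decide (s.2 = 1))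

/-- Steps of a Schröder path. -/
inductive SStep : Type
  | u | d | h
deriving DecidableEq

/-- The width of a Schröder step. -/
def swidth : SStep → ℕ
  | .u => 1
  | .d => 1
  | .h => 2

/-- The height-change of a Schröder step. -/
def shc : SStep → ℤ
  | .u => 1
  | .d => -1
  | .h => 0

/-- A Schröder path of semilength `n`. -/
def IsSchroder (n : ℕ) (P : List SStep) : Prop :=
  (P.map swidth).sum = 2 * n ∧ (P.map shc).sum = 0 ∧
  ∀ i : ℕ, 0 ≤ ((P.take i).map shc).sum

/-- Schröder paths of semilength `n` without triple descents. -/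
def SchP (n : ℕ) : Set (List SStep) :=
  {P | IsSchroder n P ∧ ¬ [SStep.d, SStep.d, SStep.d] <:+: P}

/-- Number of `h` letters preceded by a prefix of total height-change `0`. -/
noncomputable def scomp (P : List SStep) : ℕ :=
  Set.ncard {i : ℕ | P[i]? = some SStep.h ∧ ((P.take i).map shc).sum = 0}

/-- Number of `h` letters plus number of double descents. -/
noncomputable def shdd (P : List SStep) : ℕ :=
  P.countP (fun s => decide (s = SStep.h)) +
    Set.ncard {i : ℕ | P[i]? = some SStep.d ∧ P[(i + 1)]? = some SStep.d}

/-- Number of peaks `ud`. -/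
noncomputable def speak (P : List SStep) : ℕ :=
  Set.ncard {i : ℕ | P[i]? = some SStep.u ∧ P[(i + 1)]? = some SStep.d}

/-- Steps of a bicolored Dyck path: up, red down, black down. -/
inductive BStep : Type
  | u | dR | dB
deriving DecidableEq

/-- A restricted bicolored Dyck path of semilength `n`:
`u^{i_1} dR^{j_1} dB^{k_1} ⋯ u^{i_{ℓ-1}} dR^{j_{ℓ-1}} dB^{k_{ℓ-1}} u^{i_ℓ} dR^{j_ℓ}`
with positive `i`'s and `k`'s, `∑ i = n`, `∑ j + ∑ k = n`, and every prefix having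
at least as many `u`'s as down steps. -/
def IsRBD (n : ℕ) (B : List BStep) : Prop :=
  (∃ (blocks : List (ℕ × ℕ × ℕ)) (iL jL : ℕ),
    (∀ t ∈ blocks, 1 ≤ t.1 ∧ 1 ≤ t.2.2) ∧ 1 ≤ iL ∧
    B = (blocks.map (fun t =>
        List.replicate t.1 BStep.u ++ List.replicate t.2.1 BStep.dR ++
          List.replicate t.2.2 BStep.dB)).flatten ++
        (List.replicate iL BStep.u ++ List.replicate jL BStep.dR) ∧
    (blocks.map (fun t => t.1)).sum + iL = n ∧
    (blocks.map (fun t => t.2.1)).sum + jL + (blocks.map (fun t => t.2.2)).sum = n) ∧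
  ∀ i : ℕ, (B.take i).countP (fun s => decide (s ≠ BStep.u)) ≤
    (B.take i).countP (fun s => decide (s = BStep.u))

/-- The length of the final run of red down steps. -/
def blast (B : List BStep) : ℕ := (B.reverse.takeWhile (fun s => decide (s = BStep.dR))).length

/-- The number of double ascents `uu`. -/
noncomputable def bdasc (B : List BStep) : ℕ :=
  Set.ncard {i : ℕ | B[i]? = some BStep.u ∧ B[(i + 1)]? = some BStep.u}

/-- The number of occurrences of `u dB u` or `dR dB u`. -/
noncomputable def bbval (B : List BStep) : ℕ :=
  Set.ncard {i : ℕ | (B[i]? = some BStep.u ∨ B[i]? = some BStep.dR) ∧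
    B[(i + 1)]? = some BStep.dB ∧ B[(i + 2)]? = some BStep.u}

/-- `π : ℕ → ℕ` encodes a permutation of `{1,…,N}`, with value `0` outside
(in particular `π 0 = 0`). -/
def IsPermOn (N : ℕ) (π : ℕ → ℕ) : Prop :=
  Set.BijOn π (Set.Icc 1 N) (Set.Icc 1 N) ∧ ∀ i, i ∉ Set.Icc 1 N → π i = 0

/-- `π` contains the pattern given by the word `σ`. -/
def ContainsPat (N : ℕ) (π : ℕ → ℕ) (σ : List ℕ) : Prop :=
  ∃ f : Fin σ.length → ℕ, StrictMono f ∧ (∀ t, f t ∈ Set.Icc 1 N) ∧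
    ∀ s t : Fin σ.length, π (f s) < π (f t) ↔ σ.get s < σ.get t

/-- Permutations of `{1,…,N}` avoiding the patterns `2341`, `2431` and `3241`. -/
def PermSet (N : ℕ) : Set (ℕ → ℕ) :=
  {π | IsPermOn N π ∧ ¬ContainsPat N π [2, 3, 4, 1] ∧ ¬ContainsPat N π [2, 4, 3, 1] ∧
    ¬ContainsPat N π [3, 2, 4, 1]}

/-- `block(π)`: the number of `j ∈ {1,…,N}` with `{π(1),…,π(j)} = {1,…,j}`. -/
noncomputable def blockStat (N : ℕ) (π : ℕ → ℕ) : ℕ :=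
  Set.ncard {j : ℕ | 1 ≤ j ∧ j ≤ N ∧ π '' Set.Icc 1 j = Set.Icc 1 j}

/-- `asc(π)`: the number of ascents of `π`. -/
noncomputable def ascStat (N : ℕ) (π : ℕ → ℕ) : ℕ :=
  Set.ncard {i : ℕ | 1 ≤ i ∧ i + 1 ≤ N ∧ π i < π (i + 1)}

/-- `crit(π)`: the number of critical entries of `π`. -/
noncomputable def critStat (N : ℕ) (π : ℕ → ℕ) : ℕ :=
  Set.ncard {i : ℕ | 1 ≤ i ∧ i ≤ N ∧ ∀ j k : ℕ, 1 ≤ j → j < i → i < k → k ≤ N →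
    π j < π i → π k < π i → π j < π k}

/-- An inversion sequence: `0 ≤ e_i < i` (1-indexed). -/
def IsInvSeq (e : List ℕ) : Prop := ∀ i : Fin e.length, e.get i < i.val + 1

/-- `e` contains the pattern `101`. -/
def Contains101 (e : List ℕ) : Prop :=
  ∃ i j k : Fin e.length, i < j ∧ j < k ∧ e.get j < e.get i ∧ e.get i = e.get k

/-- `e` contains the pattern `102`. -/
def Contains102 (e : List ℕ) : Prop :=
  ∃ i j k : Fin e.length, i < j ∧ j < k ∧ e.get j < e.get i ∧ e.get i < e.get k

/-- `e` contains the pattern `021`. -/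
def Contains021 (e : List ℕ) : Prop :=
  ∃ i j k : Fin e.length, i < j ∧ j < k ∧ e.get i < e.get k ∧ e.get k < e.get j

/-- Inversion sequences of length `n` avoiding `101` and `102`. -/
def ISet (n : ℕ) : Set (List ℕ) :=
  {e | e.length = n ∧ IsInvSeq e ∧ ¬Contains101 e ∧ ¬Contains102 e}

/-- Inversion sequences of length `n` avoiding `101` and `021`. -/
def JSet (n : ℕ) : Set (List ℕ) :=
  {e | e.length = n ∧ IsInvSeq e ∧ ¬Contains101 e ∧ ¬Contains021 e}

/-- The largest entry of `e` (`0` for the empty sequence). -/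
def maxVal (e : List ℕ) : ℕ := e.foldr max 0

/-- The largest (1-indexed) position of the maximal entry of `e`. -/
def maxid (e : List ℕ) : ℕ := e.length - e.reverse.idxOf (maxVal e)

/-- `e` with the entry at position `maxid e` removed. -/
def ehat (e : List ℕ) : List ℕ := e.eraseIdx (maxid e - 1)

/-- `omi(e)`: the number of `i ∈ {1,…,n}` not occurring as an entry of `e`. -/
noncomputable def omi (e : List ℕ) : ℕ := Set.ncard {i : ℕ | 1 ≤ i ∧ i ≤ e.length ∧ i ∉ e}

/-- `cons(e)`: the number of `i ∈ {1,…,n-1}` such that both `i-1` and `i` occur in `e`. -/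
noncomputable def consStat (e : List ℕ) : ℕ :=
  Set.ncard {i : ℕ | 1 ≤ i ∧ i + 1 ≤ e.length ∧ (i - 1) ∈ e ∧ i ∈ e}

/-- `first(e)`: the length of the initial run of zeros of `e`. -/
def firstStat (e : List ℕ) : ℕ := (e.takeWhile (fun v => decide (v = 0))).length

/-- `single(e)`: the number of positive integers occurring exactly once in `e`. -/
noncomputable def singleStat (e : List ℕ) : ℕ := Set.ncard {v : ℕ | 1 ≤ v ∧ e.count v = 1}

/-- The binomial coefficient `C(p,q)`, interpreted as `0` unless `0 ≤ q ≤ p`. -/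
def C (p q : ℤ) : ℤ := if 0 ≤ q ∧ q ≤ p then (p.toNat.choose q.toNat : ℤ) else 0



/-!
Classify F-paths by their last step. A north step raises the height `Σ b - Σ a` by one; every
other F-step lowers it by some `d ≥ 0`, and there are exactly `d + 1` such steps
`(p + 1, p + 1 - d)`, `p ≤ d`. Hence `D m k := [X^k] (1 - X)^(-2m)` (`descentWeight m k`) counts
the sequences of `m` non-north steps of total descent `k`, as `Σ (d + 1) X^d = (1 - X)^(-2)`.
The number `f n l h` of F-paths of length `n` with `l` north steps and final height `h` satisfies
a recursion in `n` that is solved by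
`(n + 1) f n l h = (h + 1) C(n + 1, n - l) D (n - l) (l - h)`;
the induction step reduces to coefficient identities between powers of `(1 - X)⁻¹`.
Summing over `h` gives `D (n - l + 1) l = C(2n - l + 1, l)`.
-/

open Finset

@[simp]
lemma fnorth_append_singleton (Q : List (ℤ × ℤ)) (s : ℤ × ℤ) :
    fnorth (Q ++ [s]) = fnorth Q + if s = (0, 1) then 1 else 0 := by
  simp [fnorth, List.countP_append]

@[simp]
lemma fheight_append_singleton (Q : List (ℤ × ℤ)) (s : ℤ × ℤ) :
    fheight (Q ++ [s]) = fheight Q + (s.2 - s.1) := by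
  simp only [fheight, List.map_append, List.sum_append, List.map_singleton, List.sum_singleton]
  ring

lemma fheight_le_fnorth {Q : List (ℤ × ℤ)} (hQ : ∀ s ∈ Q, IsFStep s) :
    fheight Q ≤ fnorth Q := by
  induction Q using List.reverseRecOn with
  | nil => simp [fheight, fnorth]
  | append_singleton Q s ih =>
    simp only [List.mem_append, List.mem_singleton] at hQ
    have ih := ih fun t ht => hQ t (.inl ht)
    simp only [fheight_append_singleton, fnorth_append_singleton]
    rcases hQ s (.inr rfl) with rfl | ⟨ha, hb⟩
    · simp only [if_true, Nat.cast_add, Nat.cast_one]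
      omega
    · split_ifs <;> push_cast <;> omega

lemma fheight_nonneg {Q : List (ℤ × ℤ)} (hQ : IsFPath Q) : 0 ≤ fheight Q := by
  simpa [fheight] using hQ.2 Q.length

lemma isFPath_append_singleton_iff {Q : List (ℤ × ℤ)} {s : ℤ × ℤ} :
    IsFPath (Q ++ [s]) ↔ IsFPath Q ∧ IsFStep s ∧ 0 ≤ fheight (Q ++ [s]) := by
  simp only [IsFPath, List.mem_append, List.mem_singleton]
  constructor
  · rintro ⟨hsteps, hprefix⟩
    refine ⟨⟨fun t ht => hsteps t (.inl ht), fun i => ?_⟩, hsteps s (.inr rfl), ?_⟩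
    · have := hprefix (min i Q.length)
      rwa [List.take_append_of_le_length (min_le_right _ _), ← List.take_take,
        List.take_length] at this
    · simpa [fheight] using hprefix (Q.length + 1)
  · rintro ⟨⟨hsteps, hprefix⟩, hs, hheight⟩
    refine ⟨by rintro t (ht | rfl); exacts [hsteps t ht, hs], fun i => ?_⟩
    rcases le_or_gt i Q.length with hi | hi
    · rw [List.take_append_of_le_length hi]
      exact hprefix i
    · rw [List.take_of_length_le (by simpa using hi)]
      simpa [fheight] using hheight

def descentSteps (d : ℕ) : Finset (ℤ × ℤ) :=
  (range (d + 1)).image fun p : ℕ => ((p : ℤ) + 1, (p : ℤ) + 1 - d)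

lemma mem_descentSteps {d : ℕ} {s : ℤ × ℤ} :
    s ∈ descentSteps d ↔ 1 ≤ s.1 ∧ s.2 ≤ 1 ∧ s.1 - s.2 = d := by
  simp only [descentSteps, mem_image, mem_range]
  constructor
  · rintro ⟨p, hp, rfl⟩
    omega
  · rintro ⟨ha, hb, hd⟩
    refine ⟨(s.1 - 1).toNat, by omega, Prod.ext ?_ ?_⟩ <;> simp <;> omega

lemma card_descentSteps (d : ℕ) : #(descentSteps d) = d + 1 := by
  rw [descentSteps, card_image_of_injective _ fun p q h => by simpa using congr_arg Prod.fst h,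
    card_range]

lemma append_singleton_injective {α : Type*} :
    Function.Injective fun x : List α × α => x.1 ++ [x.2] :=
  fun _ _ h => Prod.ext (List.append_singleton_inj.1 h).1 (List.append_singleton_inj.1 h).2

def fpathFinset : ℕ → ℕ → ℕ → Finset (List (ℤ × ℤ))
  | 0, l, h => if l = 0 ∧ h = 0 then {[]} else ∅
  | n + 1, l, h =>
    ((if 1 ≤ l ∧ 1 ≤ h then fpathFinset n (l - 1) (h - 1) ×ˢ {(0, 1)} else ∅) ∪
      (Icc h l).biUnion fun h' => fpathFinset n l h' ×ˢ descentSteps (h' - h)).image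
      fun x => x.1 ++ [x.2]

lemma append_singleton_mem_fpaths_iff {n l h : ℕ} {Q : List (ℤ × ℤ)} {s : ℤ × ℤ} :
    (Q ++ [s] ∈ FPaths (n + 1) ∧ fnorth (Q ++ [s]) = l ∧ fheight (Q ++ [s]) = h) ↔
      ((1 ≤ l ∧ 1 ≤ h) ∧ (Q ∈ FPaths n ∧ fnorth Q = l - 1 ∧ fheight Q = (h - 1 : ℕ)) ∧
          s = (0, 1)) ∨
        ∃ h', (h ≤ h' ∧ h' ≤ l) ∧ (Q ∈ FPaths n ∧ fnorth Q = l ∧ fheight Q = h') ∧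
          s ∈ descentSteps (h' - h) := by
  simp only [FPaths, Set.mem_ofPred_eq, List.length_append, List.length_singleton,
    Nat.add_right_cancel_iff, isFPath_append_singleton_iff, fheight_append_singleton,
    fnorth_append_singleton, mem_descentSteps]
  by_cases hs : s = (0, 1)
  · subst hs
    simp only [and_true, IsFStep, true_or, true_and, sub_zero, if_true]
    constructor
    · rintro ⟨⟨hlen, hQ, -⟩, hn, hht⟩
      have := fheight_nonneg hQ
      exact .inl ⟨⟨by omega, by omega⟩, ⟨hlen, hQ⟩, by omega, by omega⟩
    · rintro (⟨⟨hl, hh⟩, ⟨hlen, hQ⟩, hn, hht⟩ | ⟨_, _, _, h10, _⟩)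
      · exact ⟨⟨hlen, hQ, by omega⟩, by omega, by omega⟩
      · exact absurd h10 (by decide)
  · simp only [hs, and_false, false_or, IsFStep]
    constructor
    · rintro ⟨⟨hlen, hQ, ⟨hs1, hs2⟩, -⟩, hn, hht⟩
      have := fheight_le_fnorth hQ.1
      exact ⟨(fheight Q).toNat, ⟨by omega, by omega⟩, ⟨⟨hlen, hQ⟩, hn, by omega⟩, hs1, hs2,
        by omega⟩
    · rintro ⟨a, ⟨hha, hal⟩, ⟨⟨hlen, hQ⟩, hn, ha⟩, hs1, hs2, hd⟩
      exact ⟨⟨hlen, hQ, ⟨hs1, hs2⟩, by omega⟩, hn, by omega⟩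

lemma mem_fpathFinset {n l h : ℕ} {Q : List (ℤ × ℤ)} :
    Q ∈ fpathFinset n l h ↔ Q ∈ FPaths n ∧ fnorth Q = l ∧ fheight Q = h := by
  induction n generalizing l h Q with
  | zero =>
    simp only [FPaths, Set.mem_ofPred_eq, List.length_eq_zero_iff, fpathFinset]
    constructor
    · intro hQ
      split_ifs at hQ with hlh
      · simp_all [IsFPath, fnorth, fheight]
      · simp at hQ
    · rintro ⟨⟨rfl, -⟩, hl, hh⟩
      simp_all [fnorth, fheight, eq_comm]
  | succ n ih =>
    rcases List.eq_nil_or_concat' Q with rfl | ⟨Q, s, rfl⟩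
    · simp [fpathFinset, FPaths]
    have hnorth :
        ((Q, s) ∈ if 1 ≤ l ∧ 1 ≤ h then fpathFinset n (l - 1) (h - 1) ×ˢ {(0, 1)} else ∅) ↔
          (1 ≤ l ∧ 1 ≤ h) ∧ Q ∈ fpathFinset n (l - 1) (h - 1) ∧ s = (0, 1) := by
      split_ifs <;> simp [*, eq_comm]
    rw [fpathFinset,
      show Q ++ [s] = (fun x : List (ℤ × ℤ) × (ℤ × ℤ) => x.1 ++ [x.2]) (Q, s) from rfl,
      append_singleton_injective.mem_finset_image, append_singleton_mem_fpaths_iff]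
    simp only [mem_union, mem_biUnion, mem_product, mem_Icc, hnorth, ih]

lemma fpathFinset_eq_empty_of_lt {n l : ℕ} (hnl : n < l) (h : ℕ) : fpathFinset n l h = ∅ :=
  eq_empty_of_forall_notMem fun Q hQ => by
    obtain ⟨⟨hlen, -⟩, hl, -⟩ := mem_fpathFinset.1 hQ
    have : fnorth Q ≤ Q.length := List.countP_le_length
    omega

lemma disjoint_fpathFinset {n l a b : ℕ} (hab : a ≠ b) :
    Disjoint (fpathFinset n l a) (fpathFinset n l b) :=
  disjoint_left.2 fun Q ha hb => hab <| by
    have := (mem_fpathFinset.1 ha).2.2.symm.trans (mem_fpathFinset.1 hb).2.2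
    omega

lemma card_fpathFinset_succ (n l h : ℕ) :
    #(fpathFinset (n + 1) l h) =
      (if 1 ≤ l ∧ 1 ≤ h then #(fpathFinset n (l - 1) (h - 1)) else 0) +
        ∑ h' ∈ Icc h l, (h' - h + 1) * #(fpathFinset n l h') := by
  have hnorth : ∀ d, Disjoint ({(0, 1)} : Finset (ℤ × ℤ)) (descentSteps d) := fun d => by
    simp [mem_descentSteps]
  rw [fpathFinset, card_image_of_injective _ append_singleton_injective, card_union_of_disjoint,
    card_biUnion]
  · congr 1
    · split_ifs <;> simp
    · refine sum_congr rfl fun h' _ => ?_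
      rw [card_product, card_descentSteps, mul_comm]
  · exact fun a _ b _ hab => disjoint_product.2 (.inl (disjoint_fpathFinset hab))
  · split_ifs
    · exact (disjoint_biUnion_right _ _ _).2 fun h' _ => disjoint_product.2 (.inr (hnorth _))
    · exact disjoint_empty_left _

lemma card_fpathFinset_self (n h : ℕ) : #(fpathFinset n n h) = if h = n then 1 else 0 := by
  induction n generalizing h with
  | zero => by_cases h = 0 <;> simp [fpathFinset, *]
  | succ n ih =>
    rw [card_fpathFinset_succ]
    simp only [fpathFinset_eq_empty_of_lt (Nat.lt_succ_self n), card_empty, mul_zero,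
      sum_const_zero, add_zero, Nat.add_sub_cancel, ih]
    split_ifs <;> omega

section DescentWeight

open PowerSeries

noncomputable def descentWeight (m k : ℕ) : ℚ := coeff k (invOneSubPow ℚ (2 * m) : ℚ⟦X⟧)

lemma descentWeight_zero (k : ℕ) : descentWeight 0 k = if k = 0 then 1 else 0 := by
  simp [descentWeight, invOneSubPow_zero, coeff_one]

lemma coeff_invOneSubPow_succ (d k : ℕ) :
    coeff k (invOneSubPow ℚ (d + 1) : ℚ⟦X⟧) = (d + k).choose d := by
  rw [invOneSubPow_val_succ_eq_mk_add_choose, coeff_mk]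

lemma sum_range_coeff_invOneSubPow_mul (d e k : ℕ) :
    ∑ i ∈ range (k + 1),
        coeff i (invOneSubPow ℚ d : ℚ⟦X⟧) * coeff (k - i) (invOneSubPow ℚ e : ℚ⟦X⟧) =
      coeff k (invOneSubPow ℚ (d + e) : ℚ⟦X⟧) := by
  rw [invOneSubPow_add, Units.val_mul, coeff_mul, Nat.sum_antidiagonal_eq_sum_range_succ_mk]

lemma sum_range_mul_descentWeight (m k : ℕ) :
    ∑ i ∈ range (k + 1), (i + 1) * descentWeight m (k - i) = descentWeight (m + 1) k := by
  rw [descentWeight, show 2 * (m + 1) = 2 + 2 * m by ring, ← sum_range_coeff_invOneSubPow_mul]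
  refine sum_congr rfl fun i _ => ?_
  rw [coeff_invOneSubPow_succ, descentWeight]
  simp [add_comm]

lemma sum_range_sq_mul_descentWeight (m k : ℕ) :
    (m + 1) * ∑ i ∈ range (k + 1), ((i : ℚ) + 1) ^ 2 * descentWeight m (k - i) =
      (m + k + 1) * descentWeight (m + 1) k := by
  have hsq : ∀ i : ℕ, ((i : ℚ) + 1) ^ 2 =
      2 * coeff i (invOneSubPow ℚ 3 : ℚ⟦X⟧) - coeff i (invOneSubPow ℚ 2 : ℚ⟦X⟧) := fun i => by
    rw [coeff_invOneSubPow_succ, coeff_invOneSubPow_succ, Nat.cast_choose_two,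
      Nat.choose_one_right]
    push_cast
    ring
  have hpascal := Nat.add_one_mul_choose_eq (2 * m + 1 + k) (2 * m + 1)
  simp only [hsq, sub_mul, mul_assoc, sum_sub_distrib, ← mul_sum, descentWeight,
    sum_range_coeff_invOneSubPow_mul]
  rw [show 3 + 2 * m = (2 * m + 2) + 1 by ring, show 2 + 2 * m = (2 * m + 1) + 1 by ring,
    show 2 * (m + 1) = (2 * m + 1) + 1 by ring, coeff_invOneSubPow_succ, coeff_invOneSubPow_succ,
    show 2 * m + 2 + k = 2 * m + 1 + k + 1 by ring]
  rw [show 2 * m + 1 + 1 = 2 * m + 2 by ring] at hpascal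
  have := congr_arg (Nat.cast : ℕ → ℚ) hpascal
  push_cast at this ⊢
  linear_combination (-1 : ℚ) * this

lemma sum_range_mul_mul_descentWeight (m k h : ℕ) :
    (m + 1) * ∑ i ∈ range (k + 1), ((i : ℚ) + 1) * (h + i + 1) * descentWeight m (k - i) =
      ((h + 1) * (m + 1) + k) * descentWeight (m + 1) k := by
  have hsplit : ∑ i ∈ range (k + 1), ((i : ℚ) + 1) * (h + i + 1) * descentWeight m (k - i) =
      h * ∑ i ∈ range (k + 1), ((i : ℚ) + 1) * descentWeight m (k - i) +
        ∑ i ∈ range (k + 1), ((i : ℚ) + 1) ^ 2 * descentWeight m (k - i) := by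
    rw [mul_sum, ← sum_add_distrib]
    exact sum_congr rfl fun i _ => by ring
  rw [hsplit, mul_add, sum_range_sq_mul_descentWeight, sum_range_mul_descentWeight]
  ring

lemma descentWeight_succ (m k : ℕ) : descentWeight (m + 1) k = (2 * m + 1 + k).choose k := by
  rw [descentWeight, show 2 * (m + 1) = 2 * m + 1 + 1 by ring, coeff_invOneSubPow_succ,
    Nat.choose_symm_add]

end DescentWeight

lemma natCast_mul_sum_card_fpathFinset {m : ℕ}
    (hm : ∀ k h, ((h + k + m + 1 : ℕ) : ℚ) * #(fpathFinset (h + k + m) (h + k) h) =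
      (h + 1) * (h + k + m + 1).choose m * descentWeight m k) (k h : ℕ) :
    ((h + k + m + 1 : ℕ) : ℚ) *
        (∑ h' ∈ Icc h (h + k), (h' - h + 1) * #(fpathFinset (h + k + m) (h + k) h') : ℕ) =
      (h + k + m + 1).choose m *
        ∑ i ∈ range (k + 1), ((i : ℚ) + 1) * (h + i + 1) * descentWeight m (k - i) := by
  rw [← Ico_add_one_right_eq_Icc, sum_Ico_eq_sum_range, show h + k + 1 - h = k + 1 by omega]
  push_cast
  rw [mul_sum, mul_sum]
  refine sum_congr rfl fun i hi => ?_
  have hik : i ≤ k := Nat.lt_succ_iff.1 (mem_range.1 hi)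
  have := hm (k - i) (h + i)
  rw [show h + i + (k - i) + m = h + k + m by omega, show h + i + (k - i) = h + k by omega] at this
  push_cast [Nat.add_sub_cancel_left] at this ⊢
  linear_combination ((i : ℚ) + 1) * this

lemma natCast_mul_card_fpathFinset (m k h : ℕ) :
    ((h + k + m + 1 : ℕ) : ℚ) * #(fpathFinset (h + k + m) (h + k) h) =
      (h + 1) * (h + k + m + 1).choose m * descentWeight m k := by
  induction m generalizing k h with
  | zero =>
    rw [add_zero, card_fpathFinset_self, descentWeight_zero, Nat.choose_zero_right]
    rcases Nat.eq_zero_or_pos k with rfl | hk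
    · simp
    · simp [hk.ne']
  | succ m ih =>
    refine Nat.strong_induction_on h fun h ihh => ?_
    have hdescent := natCast_mul_sum_card_fpathFinset ih k h
    set n := h + k + m with hn
    have hnorth : ((n + 1 : ℕ) : ℚ) *
        (if 1 ≤ h + k ∧ 1 ≤ h then #(fpathFinset n (h + k - 1) (h - 1)) else 0 : ℕ) =
          h * (n + 1).choose (m + 1) * descentWeight (m + 1) k := by
      rcases Nat.eq_zero_or_pos h with rfl | hh
      · simp
      · have := ihh (h - 1) (by omega)
        rw [show h - 1 + k + (m + 1) = n by omega, show h - 1 + k = h + k - 1 by omega] at this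
        rw [if_pos ⟨by omega, hh⟩, this, Nat.cast_sub hh, Nat.cast_one, sub_add_cancel]
    have hweights := sum_range_mul_mul_descentWeight m k h
    have hchoose₁ : ((n + 2 : ℕ) : ℚ) * (n + 1).choose m = (n + 2).choose (m + 1) * (m + 1) := by
      exact_mod_cast Nat.add_one_mul_choose_eq (n + 1) m
    have hchoose₂ : ((n + 1).choose (m + 1) : ℚ) * (m + 1) = (n + 1).choose m * (h + k + 1) := by
      have := Nat.choose_succ_right_eq (n + 1) m
      rw [show n + 1 - m = h + k + 1 by omega] at this
      exact_mod_cast this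
    rw [show h + k + (m + 1) = n + 1 by omega, card_fpathFinset_succ]
    apply mul_left_cancel₀ (show ((n + 1 : ℕ) : ℚ) * (m + 1) ≠ 0 by positivity)
    have hn' : (n : ℚ) = h + k + m := by exact_mod_cast hn
    push_cast at hnorth hdescent hchoose₁ ⊢
    linear_combination (m + 1) * (n + 2) * hnorth + (m + 1) * (n + 2) * hdescent
      + (n + 2) * h * descentWeight (m + 1) k * hchoose₂
      + (n + 2) * (n + 1).choose m * hweights
      + (n + 1) * (h + 1) * descentWeight (m + 1) k * hchoose₁
      - (n + 2) * (n + 1).choose m * descentWeight (m + 1) k * (h + 1) * hn'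

lemma C_natCast (p q : ℕ) : C p q = p.choose q := by
  rw [C]
  split_ifs with hqp
  · simp
  · rw [Nat.choose_eq_zero_of_lt (by omega), Nat.cast_zero]

lemma ncard_fpaths_fnorth_eq_sum (n l : ℕ) :
    {Q ∈ FPaths n | fnorth Q = l}.ncard = ∑ h ∈ range (l + 1), #(fpathFinset n l h) := by
  have hset : {Q ∈ FPaths n | fnorth Q = l} = ↑((range (l + 1)).biUnion (fpathFinset n l)) := by
    ext Q
    simp only [Set.mem_ofPred_eq, coe_biUnion, coe_range, Set.mem_Iio, Set.mem_iUnion, mem_coe,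
      mem_fpathFinset, exists_prop]
    constructor
    · rintro ⟨hQ, hl⟩
      have := fheight_nonneg hQ.2
      have := fheight_le_fnorth hQ.2.1
      exact ⟨(fheight Q).toNat, by omega, hQ, hl, by omega⟩
    · rintro ⟨h, -, hQ, hl, -⟩
      exact ⟨hQ, hl⟩
  rw [hset, Set.ncard_coe_finset, card_biUnion fun a _ b _ => disjoint_fpathFinset]

lemma natCast_mul_ncard_fpaths_fnorth {n l : ℕ} (hl : l ≤ n) :
    ((n + 1 : ℕ) : ℚ) * {Q ∈ FPaths n | fnorth Q = l}.ncard =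
      (n + 1).choose (l + 1) * (2 * n - l + 1).choose l := by
  have hterm : ∀ h ∈ range (l + 1), ((n + 1 : ℕ) : ℚ) * #(fpathFinset n l h) =
      (n + 1).choose (l + 1) * ((h + 1) * descentWeight (n - l) (l - h)) := fun h hh => by
    have hhl := mem_range.1 hh
    have := natCast_mul_card_fpathFinset (n - l) (l - h) h
    rw [show h + (l - h) + (n - l) = n by omega, show h + (l - h) = l by omega] at this
    rw [this, ← Nat.choose_symm_of_eq_add (show n + 1 = (l + 1) + (n - l) by omega)]
    ring
  rw [ncard_fpaths_fnorth_eq_sum, Nat.cast_sum, mul_sum, sum_congr rfl hterm, ← mul_sum,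
    sum_range_mul_descentWeight, descentWeight_succ,
    show 2 * (n - l) + 1 + l = 2 * n - l + 1 by omega]

/-- Corollary 6.3: `a_n(∗, l, ∗)`. -/
theorem fpath_north_count (n l : ℕ) :
    ((n : ℤ) + 1) * (({Q ∈ FPaths n | fnorth Q = l}).ncard : ℤ) =
    C ((n : ℤ) + 1) ((l : ℤ) + 1) * C (2 * (n : ℤ) - l + 1) (l : ℤ) := by
  have hC₁ : C ((n : ℤ) + 1) ((l : ℤ) + 1) = (n + 1).choose (l + 1) := by
    simpa using C_natCast (n + 1) (l + 1)
  rcases le_or_gt l n with hl | hl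
  · have hC₂ : C (2 * (n : ℤ) - l + 1) l = (2 * n - l + 1).choose l := by
      have hcast : ((2 * n - l + 1 : ℕ) : ℤ) = 2 * n - l + 1 := by omega
      simpa [hcast] using C_natCast (2 * n - l + 1) l
    rw [hC₁, hC₂]
    exact_mod_cast natCast_mul_ncard_fpaths_fnorth hl
  · rw [hC₁, Nat.choose_eq_zero_of_lt (by omega), ncard_fpaths_fnorth_eq_sum]
    simp [fpathFinset_eq_empty_of_lt hl]
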